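/- For j ≤ d/4, the weighted spherical moment satisfies E_{z∼Unif(S^{d-1})}[z_1^k / (1-z_1²)^j] ≤ C · E_{z∼Unif(S^{d-2j-1})}[z_1^k] for an absolute constant C (depending only on the ratio of Gamma factors, which is bounded). -/

import Mathlib

open MeasureTheory

noncomputable def sphereMarginal (d : ℕ) : Measure ℝ :=
  (volume.restrict (Set.Ioo (-1 : ℝ) 1)).withDensity fun x =>
    ENNReal.ofReal ((1 - x ^ 2) ^ (((d : ℝ) - 3) / 2) *
      (Real.Gamma ((d : ℝ) / 2) / (Real.sqrt Real.pi * Real.Gamma (((d : ℝ) - 1) / 2))))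

open Real
open scoped NNReal ENNReal

noncomputable def Aconst (d : ℕ) : ℝ :=
  Real.Gamma ((d : ℝ) / 2) / (Real.sqrt Real.pi * Real.Gamma (((d : ℝ) - 1) / 2))

noncomputable def Jint (m k : ℕ) : ℝ :=
  ∫ x in Set.Ioo (-1:ℝ) 1, x ^ k * (1 - x ^ 2) ^ (((m : ℝ) - 3) / 2)

lemma Aconst_nonneg (d : ℕ) (hd : 1 ≤ d) : 0 ≤ Aconst d := by
  have h2 : (0:ℝ) ≤ ((d:ℝ)-1)/2 := by
    have : (1:ℝ) ≤ (d:ℝ) := by exact_mod_cast hd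
    linarith
  exact div_nonneg (Real.Gamma_nonneg_of_nonneg (by positivity))
    (mul_nonneg (Real.sqrt_nonneg _) (Real.Gamma_nonneg_of_nonneg h2))

lemma Jint_nonneg (m k : ℕ) : 0 ≤ Jint m k := by
  rcases Nat.even_or_odd k with hk | hk
  · apply setIntegral_nonneg measurableSet_Ioo
    intro x hx
    have ht : (0:ℝ) < 1 - x ^ 2 := by nlinarith [hx.1, hx.2]
    exact mul_nonneg (hk.pow_nonneg x) (Real.rpow_nonneg ht.le _)
  · set f : ℝ → ℝ := fun x => x ^ k * (1 - x ^ 2) ^ (((m : ℝ) - 3) / 2) with hf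
    have hIoc : Jint m k = ∫ x in (-1:ℝ)..1, f x := by
      rw [Jint, intervalIntegral.integral_of_le (by norm_num : (-1:ℝ) ≤ 1),
        Measure.restrict_congr_set Ioo_ae_eq_Ioc]
    have hneg : ∀ x : ℝ, f (-x) = - f x := by
      intro x
      simp only [hf, neg_sq, hk.neg_pow, neg_mul]
    have h1 : (∫ x in (-1:ℝ)..1, f (-x)) = ∫ x in (-1:ℝ)..1, f x := by
      simpa using intervalIntegral.integral_comp_neg f (a := -1) (b := 1)
    have h2 : (∫ x in (-1:ℝ)..1, f (-x)) = - ∫ x in (-1:ℝ)..1, f x := by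
      simp only [hneg]
      exact intervalIntegral.integral_neg
    have : Jint m k = 0 := by rw [hIoc]; linarith [h1, h2]
    simp [this]

lemma main_eq (d j k : ℕ) (hd : 1 ≤ d) (hj : 2 * j ≤ d) :
    ∫ x, x ^ k / (1 - x ^ 2) ^ j ∂(sphereMarginal d) = Aconst d * Jint (d - 2 * j) k := by
  have hmeas : Measurable fun x : ℝ =>
      Real.toNNReal ((1 - x ^ 2) ^ (((d : ℝ) - 3) / 2) *
        (Real.Gamma ((d : ℝ) / 2) / (Real.sqrt Real.pi * Real.Gamma (((d : ℝ) - 1) / 2)))) := by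
    apply Measurable.real_toNNReal
    fun_prop
  rw [sphereMarginal]
  rw [show (fun x : ℝ => ENNReal.ofReal ((1 - x ^ 2) ^ (((d : ℝ) - 3) / 2) *
      (Real.Gamma ((d : ℝ) / 2) / (Real.sqrt Real.pi * Real.Gamma (((d : ℝ) - 1) / 2))))) =
    (fun x : ℝ => ((Real.toNNReal ((1 - x ^ 2) ^ (((d : ℝ) - 3) / 2) *
      (Real.Gamma ((d : ℝ) / 2) / (Real.sqrt Real.pi * Real.Gamma (((d : ℝ) - 1) / 2)))) : NNReal) : ℝ≥0∞))
    from rfl]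
  rw [integral_withDensity_eq_integral_smul hmeas]
  rw [Aconst, Jint, ← integral_const_mul]
  apply setIntegral_congr_fun measurableSet_Ioo
  intro x hx
  obtain ⟨hx1, hx2⟩ := hx
  have ht : (0:ℝ) < 1 - x ^ 2 := by nlinarith
  have hd1 : (1:ℝ) ≤ (d:ℝ) := by exact_mod_cast hd
  have hA : (0:ℝ) ≤ Real.Gamma ((d : ℝ) / 2) / (Real.sqrt Real.pi * Real.Gamma (((d : ℝ) - 1) / 2)) :=
    div_nonneg (Real.Gamma_nonneg_of_nonneg (by positivity))
      (mul_nonneg (Real.sqrt_nonneg _) (Real.Gamma_nonneg_of_nonneg (by linarith)))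
  have hρ : (0:ℝ) ≤ (1 - x ^ 2) ^ (((d : ℝ) - 3) / 2) *
      (Real.Gamma ((d : ℝ) / 2) / (Real.sqrt Real.pi * Real.Gamma (((d : ℝ) - 1) / 2))) :=
    mul_nonneg (Real.rpow_nonneg ht.le _) hA
  have hcoe : ((Real.toNNReal ((1 - x ^ 2) ^ (((d : ℝ) - 3) / 2) *
      (Real.Gamma ((d : ℝ) / 2) / (Real.sqrt Real.pi * Real.Gamma (((d : ℝ) - 1) / 2)))) : NNReal) : ℝ)
      = (1 - x ^ 2) ^ (((d : ℝ) - 3) / 2) *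
      (Real.Gamma ((d : ℝ) / 2) / (Real.sqrt Real.pi * Real.Gamma (((d : ℝ) - 1) / 2))) :=
    Real.coe_toNNReal _ hρ
  simp only [NNReal.smul_def, smul_eq_mul]
  rw [hcoe]
  have hcast : ((d - 2*j : ℕ) : ℝ) = (d:ℝ) - 2*j := by
    push_cast [Nat.cast_sub hj]
    ring
  have hexp : (1 - x ^ 2) ^ ((((d - 2*j : ℕ) : ℝ) - 3) / 2)
      = (1 - x ^ 2) ^ (((d:ℝ) - 3) / 2) / (1 - x ^ 2) ^ (j : ℕ) := by
    rw [← Real.rpow_natCast (1 - x ^ 2) j, ← Real.rpow_sub ht, hcast]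
    congr 1
    push_cast
    ring
  rw [hexp]
  have hj0 : ((1 - x ^ 2) ^ (j:ℕ) : ℝ) ≠ 0 := pow_ne_zero _ ht.ne'
  field_simp

lemma G1 {x : ℝ} (hx : 0 < x) : Gamma (x + 1/2) ≤ Gamma x * Real.sqrt x := by
  have h := Gamma_mul_add_mul_le_rpow_Gamma_mul_rpow_Gamma hx (by linarith : (0:ℝ) < x + 1)
    one_half_pos one_half_pos (by norm_num)
  have e : (1/2 : ℝ) * x + (1/2) * (x+1) = x + 1/2 := by ring
  rw [e, Real.Gamma_add_one hx.ne'] at h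
  calc Gamma (x + 1/2) ≤ Gamma x ^ (1/2:ℝ) * (x * Gamma x) ^ (1/2:ℝ) := h
    _ = Gamma x ^ (1/2:ℝ) * (x ^ (1/2:ℝ) * Gamma x ^ (1/2:ℝ)) := by
        rw [Real.mul_rpow hx.le (Real.Gamma_nonneg_of_nonneg hx.le)]
    _ = (Gamma x ^ (1/2:ℝ) * Gamma x ^ (1/2:ℝ)) * x ^ (1/2:ℝ) := by ring
    _ = Gamma x * Real.sqrt x := by
        rw [← Real.rpow_add (Real.Gamma_pos_of_pos hx), Real.sqrt_eq_rpow]; norm_num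

lemma G2 {x : ℝ} (hx : 0 < x) : x * Gamma x ≤ Gamma (x + 1/2) * Real.sqrt (x + 1/2) := by
  have h := G1 (by linarith : (0:ℝ) < x + 1/2)
  have e : x + 1/2 + 1/2 = x + 1 := by ring
  rw [e, Real.Gamma_add_one hx.ne'] at h
  exact h

lemma ratio_le {a b : ℝ} (ha : 0 < a) (hb : 0 < b) (h : a * (b + 1/2) ≤ 16 * b^2) :
    Gamma (a + 1/2) / Gamma a ≤ 4 * (Gamma (b + 1/2) / Gamma b) := by
  have hGa := Real.Gamma_pos_of_pos ha
  have hGb := Real.Gamma_pos_of_pos hb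
  have hs : (0:ℝ) < Real.sqrt (b + 1/2) := Real.sqrt_pos.mpr (by linarith)
  have h1 : Gamma (a + 1/2) / Gamma a ≤ Real.sqrt a :=
    (div_le_iff₀ hGa).mpr (by linarith [G1 ha])
  have h2 : b / Real.sqrt (b + 1/2) ≤ Gamma (b + 1/2) / Gamma b := by
    rw [div_le_div_iff₀ hs hGb]
    linarith [G2 hb]
  have h3 : Real.sqrt a ≤ 4 * (b / Real.sqrt (b + 1/2)) := by
    rw [mul_div_assoc', le_div_iff₀ hs, ← Real.sqrt_mul ha.le]
    calc Real.sqrt (a * (b + 1/2)) ≤ Real.sqrt (16 * b^2) := Real.sqrt_le_sqrt h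
      _ = 4 * b := by
          rw [show (16:ℝ) * b^2 = (4*b)^2 by ring, Real.sqrt_sq (by linarith)]
  linarith

lemma Aconst_le (d j : ℕ) (h1 : 2 * j + 1 ≤ d) (h2 : 4 * j ≤ d) :
    Aconst d ≤ 4 * Aconst (d - 2 * j) := by
  rcases Nat.eq_zero_or_pos j with hj0 | hj1
  · subst hj0
    simp only [Nat.mul_zero, Nat.sub_zero]
    linarith [Aconst_nonneg d (by omega)]
  · set m := d - 2 * j with hm
    have hd4 : 4 ≤ d := by omega
    have hm2 : 2 ≤ m := by omega
    have hdm : d ≤ 2 * m := by omega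
    have hD : (4:ℝ) ≤ (d:ℝ) := by exact_mod_cast hd4
    have hM : (2:ℝ) ≤ (m:ℝ) := by exact_mod_cast hm2
    have hDM : (d:ℝ) ≤ 2 * (m:ℝ) := by exact_mod_cast hdm
    set a : ℝ := ((d:ℝ) - 1) / 2 with ha_def
    set b : ℝ := ((m:ℝ) - 1) / 2 with hb_def
    have ha : 0 < a := by rw [ha_def]; linarith
    have hb : 0 < b := by rw [hb_def]; linarith
    have harith : a * (b + 1/2) ≤ 16 * b^2 := by
      rw [ha_def, hb_def]; nlinarith
    have hr := ratio_le ha hb harith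
    have hsp : (0:ℝ) < Real.sqrt Real.pi := Real.sqrt_pos.mpr Real.pi_pos
    have e1 : ((d:ℝ)) / 2 = a + 1/2 := by rw [ha_def]; ring
    have e2 : ((m:ℝ)) / 2 = b + 1/2 := by rw [hb_def]; ring
    rw [Aconst, Aconst, e1, e2, ← ha_def, ← hb_def]
    calc Gamma (a + 1/2) / (Real.sqrt Real.pi * Gamma a)
        = (Gamma (a + 1/2) / Gamma a) / Real.sqrt Real.pi := by ring
      _ ≤ (4 * (Gamma (b + 1/2) / Gamma b)) / Real.sqrt Real.pi := by gcongr
      _ = 4 * (Gamma (b + 1/2) / (Real.sqrt Real.pi * Gamma b)) := by ring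

/-- For `j ≤ d/4` (and `2j+1 ≤ d`), the weighted spherical moment satisfies
`E_{z∼S^{d-1}}[z_1^k/(1-z_1²)^j] ≤ C · E_{z∼S^{d-2j-1}}[z_1^k]` for an absolute constant `C`. -/
theorem weighted_sphere_moment :
    ∃ C : ℝ, 0 < C ∧ ∀ (d k j : ℕ), 2 * j + 1 ≤ d → 4 * j ≤ d →
      ∫ x, x ^ k / (1 - x ^ 2) ^ j ∂(sphereMarginal d) ≤
        C * ∫ x, x ^ k ∂(sphereMarginal (d - 2 * j)) := by
  refine ⟨4, by norm_num, ?_⟩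
  intro d k j h1 h2
  have hj : 2 * j ≤ d := by omega
  rw [main_eq d j k (by omega) hj]
  have hR : ∫ x, x ^ k ∂(sphereMarginal (d - 2 * j)) = Aconst (d - 2 * j) * Jint (d - 2 * j) k := by
    have h := main_eq (d - 2 * j) 0 k (by omega) (by omega)
    simpa using h
  rw [hR]
  have hJ : 0 ≤ Jint (d - 2 * j) k := Jint_nonneg _ _
  have hA : Aconst d ≤ 4 * Aconst (d - 2 * j) := Aconst_le d j h1 h2
  calc Aconst d * Jint (d - 2 * j) k ≤ (4 * Aconst (d - 2 * j)) * Jint (d - 2 * j) k :=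
        mul_le_mul_of_nonneg_right hA hJ
    _ = 4 * (Aconst (d - 2 * j) * Jint (d - 2 * j) k) := by ring
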